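/- arXiv:2512.02051 — 2 statements merged into one kernel-verified Lean document; each statement's English description precedes it below -/
import Mathlib

section
/- Let f, g, a₁, a₂ be functions analytic in a neighbourhood of z₀ ∈ ℂ with a₁(z₀) ≠ a₂(z₀). Suppose f − a₁ and g − a₁ both vanish at z₀ to order at least 2. Then the meromorphic function φ = ((a₁'−a₂')(f−a₁) − (a₁−a₂)(f'−a₁'))·(f−g)/((f−a₁)(f−a₂)) is analytic at z₀ and φ(z₀) = 0. -/
/-!
Away from the zeros of `f - a₁`, the quotient is
`φ = ((a₁' - a₂') - (a₁ - a₂) · logDeriv (f - a₁)) · (f - g) / (f - a₂)`.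
A logarithmic derivative has at worst a simple pole, `f - g = (f - a₁) - (g - a₁)` vanishes to
order at least `2`, and `f - a₂` does not vanish at `z₀` because `f(z₀) = a₁(z₀) ≠ a₂(z₀)`.
Hence `φ` has meromorphic order at least `1` at `z₀`: it extends analytically with a zero there.
-/

open MeasureTheory Filter Metric

noncomputable section

namespace Nevanlinna

/-- The positive part of the logarithm. -/
def logp (x : ℝ) : ℝ := max (Real.log x) 0

/-- The Nevanlinna proximity function `m(r, f)`. -/
def prox (f : ℂ → ℂ) (r : ℝ) : ℝ :=
  (2 * Real.pi)⁻¹ * ∫ θ in (0:ℝ)..(2 * Real.pi),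
    logp ‖f (r * Complex.exp (θ * Complex.I))‖

/-- The pole order of `f` at `z`: the smallest `n : ℕ` such that
`(· - z) ^ (n + 1) * f` extends analytically across `z` (with value `0`);
it equals `0` when `f` is analytic at `z`, and junk when no such `n` exists. -/
def poleOrd (f : ℂ → ℂ) (z : ℂ) : ℕ :=
  sInf {n : ℕ | AnalyticAt ℂ (fun w => (w - z) ^ (n + 1) * f w) z}

/-- The unintegrated counting function `n(t, f)` of the poles of `f`,
counted with multiplicity. -/
def poleCount (f : ℂ → ℂ) (t : ℝ) : ℝ :=
  ∑ᶠ z ∈ closedBall (0:ℂ) t, (poleOrd f z : ℝ)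

/-- The integrated counting function `N(r, f)` of the poles of `f`. -/
def N (f : ℂ → ℂ) (r : ℝ) : ℝ :=
  (∫ t in (0:ℝ)..r, (poleCount f t - poleCount f 0) / t) +
    poleCount f 0 * Real.log r

/-- The Nevanlinna characteristic `T(r, f)`. -/
def T (f : ℂ → ℂ) (r : ℝ) : ℝ := prox f r + N f r

/-- A quantity `S : ℝ → ℝ` is `S(r, f)`: it is `o(T(r, f))` as `r → ∞`, outside a
possible exceptional set of finite linear (Lebesgue) measure. -/
def SmallQty (S : ℝ → ℝ) (f : ℂ → ℂ) : Prop :=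
  ∃ E : Set ℝ, volume E < ⊤ ∧
    Tendsto (fun r => S r / T f r) (atTop ⊓ 𝓟 Eᶜ) (nhds 0)

/-- A quantity `S : ℝ → ℝ` is `S(r, f)` with an exceptional set of finite
logarithmic measure. -/
def SmallQtyLog (S : ℝ → ℝ) (f : ℂ → ℂ) : Prop :=
  ∃ E : Set ℝ, E ⊆ Set.Ioi 1 ∧ (∫⁻ t in E, ENNReal.ofReal t⁻¹) < ⊤ ∧
    Tendsto (fun r => S r / T f r) (atTop ⊓ 𝓟 Eᶜ) (nhds 0)

/-- `a` is a small function of `f`: `T(r, a) = S(r, f)`. -/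
def SmallFn (a f : ℂ → ℂ) : Prop := SmallQty (T a) f

/-- The hyper-order `ρ₁(f)` of `f` is `< 1`. -/
def HyperOrderLtOne (f : ℂ → ℂ) : Prop :=
  Filter.limsup
    (fun r => ((Real.log (Real.log (T f r)) / Real.log r : ℝ) : EReal)) atTop < 1

/-- `f` and `g` share the (small) function `a` IM (ignoring multiplicities). -/
def ShareIM (f g a : ℂ → ℂ) : Prop := {z | f z = a z} = {z | g z = a z}

/-- `f` is non-constant. -/
def Nonconst (f : ℂ → ℂ) : Prop := ¬ ∃ w : ℂ, ∀ z, f z = w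

/-- The linear differential polynomial in shift
`𝓛_k(f(z+c)) = ∑_{j=0}^{k} b_j(z) f^{(j)}(z + c)`. -/
def L (k : ℕ) (b : ℕ → ℂ → ℂ) (c : ℂ) (f : ℂ → ℂ) : ℂ → ℂ :=
  fun z => ∑ j ∈ Finset.range (k + 1), b j z * iteratedDeriv j f (z + c)

/-- The unintegrated reduced counting function `n̄(t, a; f)` of the `a`-points of
`f` (ignoring multiplicities). -/
def nbarCount (f a : ℂ → ℂ) (t : ℝ) : ℝ :=
  ((closedBall (0:ℂ) t) ∩ {z | f z = a z}).ncard

/-- The reduced integrated counting function `N̄(r, a; f)` of the `a`-points of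
`f` (ignoring multiplicities). -/
def Nbar (f a : ℂ → ℂ) (r : ℝ) : ℝ :=
  (∫ t in (0:ℝ)..r, (nbarCount f a t - nbarCount f a 0) / t) +
    nbarCount f a 0 * Real.log r

/-- The unintegrated reduced counting function of the `a`-points of `f` of
multiplicity at least `2`. -/
def nbar2Count (f a : ℂ → ℂ) (t : ℝ) : ℝ :=
  ((closedBall (0:ℂ) t) ∩
    {z | f z = a z ∧ deriv (fun w => f w - a w) z = 0}).ncard

/-- The reduced integrated counting function `N̄_{(2}(r, a; f)` of the `a`-points
of `f` of multiplicity at least `2`. -/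
def Nbar2 (f a : ℂ → ℂ) (r : ℝ) : ℝ :=
  (∫ t in (0:ℝ)..r, (nbar2Count f a t - nbar2Count f a 0) / t) +
    nbar2Count f a 0 * Real.log r

/-- The sequence `ψ₁, ψ₂, …` : `psiSeq ψ₁ (i - 1)` is `ψ_i`, defined by the
recurrence `ψ_{i+1} = ψ_i' + ψ₁ ψ_i`. -/
def psiSeq (ψ₁ : ℂ → ℂ) : ℕ → ℂ → ℂ
  | 0 => ψ₁
  | n + 1 => fun z => deriv (psiSeq ψ₁ n) z + ψ₁ z * psiSeq ψ₁ n z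

end Nevanlinna

open Nevanlinna

open Topology

section

variable {𝕜 : Type*} [NontriviallyNormedField 𝕜] {E : Type*} [NormedAddCommGroup E]
  [NormedSpace 𝕜 E] {x : 𝕜}

theorem MeromorphicAt.exists_analyticAt_eq_zero_of_meromorphicOrderAt_pos {f : 𝕜 → E}
    (hf : MeromorphicAt f x) (ho : 0 < meromorphicOrderAt f x) :
    ∃ g : 𝕜 → E, AnalyticAt 𝕜 g x ∧ g x = 0 ∧ f =ᶠ[𝓝[≠] x] g := by
  obtain ⟨g, hg, hfg⟩ := hf.meromorphicOrderAt_nonneg_iff.1 ho.le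
  refine ⟨g, hg, apply_eq_zero_of_analyticOrderAt_ne_zero ?_, hfg⟩
  rw [meromorphicOrderAt_congr hfg, hg.meromorphicOrderAt_eq] at ho
  exact fun h ↦ ho.ne' (by simp [h])

theorem AnalyticAt.natCast_le_meromorphicOrderAt {f : 𝕜 → E} (hf : AnalyticAt 𝕜 f x) {n : ℕ}
    (hn : (n : ℕ∞) ≤ analyticOrderAt f x) : (n : WithTop ℤ) ≤ meromorphicOrderAt f x := by
  rw [hf.meromorphicOrderAt_eq]
  exact ENat.map_natCast_strictMono.monotone hn

variable [CompleteSpace 𝕜] [CharZero 𝕜]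

theorem meromorphicOrderAt_logDeriv_ge_neg_one {f : 𝕜 → 𝕜} (hf : MeromorphicAt f x) :
    -1 ≤ meromorphicOrderAt (logDeriv f) x := by
  by_cases h₀ : meromorphicOrderAt f x = 0
  · exact (by decide : (-1 : WithTop ℤ) ≤ 0).trans (meromorphicOrderAt_logDeriv_nonneg hf h₀)
  by_cases hTop : meromorphicOrderAt f x = ⊤
  · suffices meromorphicOrderAt (logDeriv f) x = ⊤ by simp [this]
    rw [meromorphicOrderAt_eq_top_iff]
    filter_upwards [meromorphicOrderAt_eq_top_iff.1 hTop] with z hz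
    simp [logDeriv_apply, hz]
  · exact (meromorphicOrderAt_logDeriv_eq_neg_one hf h₀ hTop).ge

theorem meromorphicOrderAt_add_mul_logDeriv_ge_neg_one {b c h : 𝕜 → 𝕜}
    (hb : AnalyticAt 𝕜 b x) (hc : AnalyticAt 𝕜 c x) (hh : MeromorphicAt h x) :
    -1 ≤ meromorphicOrderAt (b + c * logDeriv h) x := by
  have hcL : -1 ≤ meromorphicOrderAt (c * logDeriv h) x := by
    rw [meromorphicOrderAt_mul hc.meromorphicAt hh.logDeriv]
    calc (-1 : WithTop ℤ) = 0 + -1 := by decide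
      _ ≤ _ := add_le_add hc.meromorphicOrderAt_nonneg (meromorphicOrderAt_logDeriv_ge_neg_one hh)
  exact (le_min ((by decide : (-1 : WithTop ℤ) ≤ 0).trans hb.meromorphicOrderAt_nonneg) hcL).trans
    (meromorphicOrderAt_add hb.meromorphicAt (hc.meromorphicAt.mul hh.logDeriv))

theorem meromorphicOrderAt_add_mul_logDeriv_mul_div_pos {b c h k u : 𝕜 → 𝕜}
    (hb : AnalyticAt 𝕜 b x) (hc : AnalyticAt 𝕜 c x) (hh : MeromorphicAt h x)
    (hk : AnalyticAt 𝕜 k x) (hk₂ : 2 ≤ analyticOrderAt k x)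
    (hu : AnalyticAt 𝕜 u x) (hux : u x ≠ 0) :
    0 < meromorphicOrderAt ((b + c * logDeriv h) * k / u) x := by
  have hP := hb.meromorphicAt.add (hc.meromorphicAt.mul hh.logDeriv)
  have hu₀ : meromorphicOrderAt u x = 0 := by
    simp [hu.meromorphicOrderAt_eq, hu.analyticOrderAt_eq_zero.2 hux]
  rw [meromorphicOrderAt_div (hP.mul hk.meromorphicAt) hu.meromorphicAt,
    meromorphicOrderAt_mul hP hk.meromorphicAt, hu₀, sub_zero]
  calc (0 : WithTop ℤ) < -1 + 2 := by decide
    _ ≤ _ := add_le_add (meromorphicOrderAt_add_mul_logDeriv_ge_neg_one hb hc hh)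
      (hk.natCast_le_meromorphicOrderAt hk₂)

end

/-- If `f, g, a₁, a₂` are analytic near `z₀`, `a₁(z₀) ≠ a₂(z₀)`, and both
`f - a₁` and `g - a₁` vanish at `z₀` to order at least `2`, then the
meromorphic function
`φ = ((a₁'-a₂')(f-a₁) - (a₁-a₂)(f'-a₁'))(f-g)/((f-a₁)(f-a₂))`
is analytic at `z₀` with `φ(z₀) = 0`. -/
theorem statement10
    (z₀ : ℂ) (f g a₁ a₂ : ℂ → ℂ)
    (hf : AnalyticAt ℂ f z₀) (hg : AnalyticAt ℂ g z₀)
    (ha₁ : AnalyticAt ℂ a₁ z₀) (ha₂ : AnalyticAt ℂ a₂ z₀)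
    (hne : a₁ z₀ ≠ a₂ z₀)
    (hordf : 2 ≤ analyticOrderAt (f - a₁) z₀)
    (hordg : 2 ≤ analyticOrderAt (g - a₁) z₀) :
    ∃ φ : ℂ → ℂ, AnalyticAt ℂ φ z₀ ∧ φ z₀ = 0 ∧
      ∀ᶠ z in nhds z₀, (f z - a₁ z) * (f z - a₂ z) ≠ 0 →
        φ z = ((deriv a₁ z - deriv a₂ z) * (f z - a₁ z) -
            (a₁ z - a₂ z) * (deriv f z - deriv a₁ z)) * (f z - g z) /
          ((f z - a₁ z) * (f z - a₂ z)) := by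
  have hf₀ : (f - a₁) z₀ = 0 :=
    apply_eq_zero_of_analyticOrderAt_ne_zero ((lt_of_lt_of_le (by decide) hordf).ne')
  have hfa₂ : f z₀ - a₂ z₀ ≠ 0 := by rwa [sub_eq_zero.1 hf₀, sub_ne_zero]
  have hfg : 2 ≤ analyticOrderAt (f - g) z₀ := by
    rw [← sub_sub_sub_cancel_right f g a₁]
    exact (le_min hordf hordg).trans le_analyticOrderAt_sub
  obtain ⟨φ, hφ, hφ₀, hφeq⟩ :=
    MeromorphicAt.exists_analyticAt_eq_zero_of_meromorphicOrderAt_pos (by fun_prop)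
      (meromorphicOrderAt_add_mul_logDeriv_mul_div_pos (ha₁.deriv.sub ha₂.deriv) (ha₂.sub ha₁)
        (hf.sub ha₁).meromorphicAt (hf.sub hg) hfg (hf.sub ha₂) hfa₂)
  have hderiv : ∀ᶠ z in 𝓝 z₀, deriv (f - a₁) z = deriv f z - deriv a₁ z := by
    filter_upwards [hf.eventually_analyticAt, ha₁.eventually_analyticAt] with z hfz ha₁z
    exact deriv_sub hfz.differentiableAt ha₁z.differentiableAt
  refine ⟨φ, hφ, hφ₀, ?_⟩
  filter_upwards [eventually_nhdsWithin_iff.1 hφeq, hderiv] with z hφz hz hden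
  have hz₀ : z ≠ z₀ := by rintro rfl; exact hden (by rw [← Pi.sub_apply, hf₀, zero_mul])
  obtain ⟨h₁, h₂⟩ := mul_ne_zero_iff.1 hden
  rw [← hφz hz₀]
  simp only [Pi.add_apply, Pi.mul_apply, Pi.div_apply, Pi.sub_apply, logDeriv_apply, hz]
  field_simp
  ring
end
end

section
/- Let f, g, a₁, a₂ be functions analytic in a neighbourhood of z₀ ∈ ℂ with a₁(z₀) ≠ a₂(z₀) and a₁'(z₀) ≠ a₂'(z₀). Suppose that on this neighbourhood the identity ((a₁'−a₂')(f−a₁) − (a₁−a₂)(f'−a₁'))·(f−g) = (a₁'−a₂')·(f−a₁)(f−a₂) holds, that f − a₁ vanishes at z₀ to order exactly p ≥ 2, and that g − a₁ vanishes at z₀ to order exactly 1. Then g'(z₀) − a₁'(z₀) = (a₁'(z₀) − a₂'(z₀))/p. -/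
/-!
Write `f - a₁ = (z - z₀) ^ p h` and `g - a₁ = (z - z₀) k` with `h z₀ ≠ 0`, so that
`k z₀ = g' z₀ - a₁' z₀`. Away from `z₀` the identity can be divided by `(z - z₀) ^ p`,
leaving an identity between functions continuous at `z₀`. Since `p ≥ 2`, `f' - a₁'` vanishes
at `z₀`, and evaluating there gives `h (a₁ - a₂) (a₁' - a₂') = p (a₁ - a₂) k h`, that is,
`a₁' z₀ - a₂' z₀ = p k z₀`.
-/

open MeasureTheory Filter Metric

noncomputable section

open Nevanlinna

open Topology

section
variable {𝕜 : Type*} [NontriviallyNormedField 𝕜] {z₀ : 𝕜}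

theorem hasDerivAt_sub_pow_succ_mul {h : 𝕜 → 𝕜} {h' z : 𝕜} (hh : HasDerivAt h h' z) (n : ℕ) :
    HasDerivAt (fun w => (w - z₀) ^ (n + 1) * h w)
      ((z - z₀) ^ n * ((n + 1) * h z + (z - z₀) * h')) z := by
  have hpow : HasDerivAt (fun w => (w - z₀) ^ (n + 1)) ((n + 1) * (z - z₀) ^ n) z := by
    simpa using (hasDerivAt_pow (n + 1) (z - z₀)).comp_sub_const z z₀
  exact (hpow.fun_mul hh).congr_deriv (by ring)

variable [CompleteSpace 𝕜]

theorem AnalyticAt.exists_sub_eq_pow_succ_mul_of_analyticOrderAt_sub {f a : 𝕜 → 𝕜} {n : ℕ}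
    (hf : AnalyticAt 𝕜 f z₀) (ha : AnalyticAt 𝕜 a z₀)
    (hord : analyticOrderAt (f - a) z₀ = (n + 1 : ℕ)) :
    ∃ h : 𝕜 → 𝕜, AnalyticAt 𝕜 h z₀ ∧ h z₀ ≠ 0 ∧ ∀ᶠ z in 𝓝 z₀,
      f z - a z = (z - z₀) ^ (n + 1) * h z ∧
      deriv f z - deriv a z = (z - z₀) ^ n * ((n + 1) * h z + (z - z₀) * deriv h z) := by
  obtain ⟨h, hh, hh₀, hfa⟩ := (hf.sub ha).analyticOrderAt_eq_natCast.mp hord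
  refine ⟨h, hh, hh₀, ?_⟩
  have hfa : (fun z => f z - a z) =ᶠ[𝓝 z₀] fun z => (z - z₀) ^ (n + 1) * h z := hfa
  filter_upwards [hfa, hfa.deriv, hf.eventually_analyticAt, ha.eventually_analyticAt,
    hh.eventually_analyticAt] with z hz hz' hfz haz hhz
  refine ⟨hz, ?_⟩
  rw [← deriv_fun_sub hfz.differentiableAt haz.differentiableAt, hz',
    (hasDerivAt_sub_pow_succ_mul hhz.differentiableAt.hasDerivAt n).deriv]

end

theorem ContinuousAt.eq_of_eventuallyEq_nhdsNE {X Y : Type*} [TopologicalSpace X]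
    [TopologicalSpace Y] [T2Space Y] {x : X} [(𝓝[≠] x).NeBot] {φ ψ : X → Y}
    (hφ : ContinuousAt φ x) (hψ : ContinuousAt ψ x) (h : φ =ᶠ[𝓝[≠] x] ψ) : φ x = ψ x :=
  ((hφ.eventuallyEq_nhds_iff_eventuallyEq_nhdsNE hψ).mp h).eq_of_nhds

/-- With `F = f - a₁`, `F' = f' - a₁'`, `G = g - a₁`, `b = a₁ - a₂`: the identity reduces to
`F (b b' + b' G + b F') = b F' G`, and `u ^ (n + 1)` divides both `F` and `F' G`. -/
theorem reduced_identity_of_factorization {K : Type*} [Field K] {u h h' k b b' F F' G : K}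
    (n : ℕ) (hu : u ≠ 0) (hF : F = u ^ (n + 1) * h) (hF' : F' = u ^ n * ((n + 1) * h + u * h'))
    (hG : G = u * k) (hid : (b' * F - b * F') * (F - G) = b' * (F * (F + b))) :
    h * (b * b' + b' * G + b * F') = b * k * ((n + 1) * h + u * h') := by
  subst hF hF' hG
  refine mul_left_cancel₀ (pow_ne_zero (n + 1) hu) ?_
  linear_combination (-1 : K) * hid

theorem statement12_general
    (z₀ : ℂ) (f g a₁ a₂ : ℂ → ℂ) (p : ℕ) (hp : 2 ≤ p)
    (hf : AnalyticAt ℂ f z₀) (hg : AnalyticAt ℂ g z₀)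
    (ha₁ : AnalyticAt ℂ a₁ z₀) (ha₂ : AnalyticAt ℂ a₂ z₀)
    (hne : a₁ z₀ ≠ a₂ z₀)
    (hid : ∀ᶠ z in nhds z₀,
      ((deriv a₁ z - deriv a₂ z) * (f z - a₁ z) -
          (a₁ z - a₂ z) * (deriv f z - deriv a₁ z)) * (f z - g z)
        = (deriv a₁ z - deriv a₂ z) * ((f z - a₁ z) * (f z - a₂ z)))
    (hordf : analyticOrderAt (f - a₁) z₀ = (p : ℕ∞))
    (hordg : analyticOrderAt (g - a₁) z₀ = (1 : ℕ∞)) :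
    deriv g z₀ - deriv a₁ z₀ = (deriv a₁ z₀ - deriv a₂ z₀) / (p : ℂ) := by
  obtain ⟨n, rfl⟩ : ∃ n, p = n + 1 + 1 := ⟨p - 2, by omega⟩
  obtain ⟨h, hh, hh₀, hF⟩ := hf.exists_sub_eq_pow_succ_mul_of_analyticOrderAt_sub ha₁ hordf
  obtain ⟨k, hk, -, hG⟩ :=
    hg.exists_sub_eq_pow_succ_mul_of_analyticOrderAt_sub ha₁ (n := 0) (by simpa using hordg)
  have hkey : (fun z => h z * ((a₁ z - a₂ z) * (deriv a₁ z - deriv a₂ z) +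
        (deriv a₁ z - deriv a₂ z) * (g z - a₁ z) + (a₁ z - a₂ z) * (deriv f z - deriv a₁ z)))
      =ᶠ[𝓝[≠] z₀]
        fun z => (a₁ z - a₂ z) * k z * ((((n + 1 : ℕ) : ℂ) + 1) * h z + (z - z₀) * deriv h z) := by
    filter_upwards [nhdsWithin_le_nhds (hid.and (hF.and hG)), self_mem_nhdsWithin]
      with z ⟨hidz, ⟨hFz, hF'z⟩, ⟨hGz, _⟩⟩ hz
    exact reduced_identity_of_factorization (n + 1) (sub_ne_zero.mpr hz) hFz hF'z
      (by simpa using hGz) (by linear_combination hidz)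
  have hz₀ := ContinuousAt.eq_of_eventuallyEq_nhdsNE (by fun_prop) (by fun_prop) hkey
  have hdg : deriv g z₀ - deriv a₁ z₀ = k z₀ := by simpa using hG.self_of_nhds.2
  simp only [hF.self_of_nhds.2, hG.self_of_nhds.1, sub_self, zero_pow n.succ_ne_zero, zero_mul,
    mul_zero, add_zero] at hz₀
  have hlead : deriv a₁ z₀ - deriv a₂ z₀ = ((n + 1 + 1 : ℕ) : ℂ) * k z₀ := by
    refine mul_left_cancel₀ (mul_ne_zero hh₀ (sub_ne_zero.mpr hne)) ?_
    push_cast at hz₀ ⊢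
    linear_combination hz₀
  rw [hdg, hlead, mul_div_cancel_left₀ _ (Nat.cast_ne_zero.mpr (by omega))]

/-- Local computation: if near `z₀` the identity
`((a₁'-a₂')(f-a₁) - (a₁-a₂)(f'-a₁'))(f-g) = (a₁'-a₂')(f-a₁)(f-a₂)` holds
(i.e. `φ ≡ a₁'-a₂'`), `a₁(z₀) ≠ a₂(z₀)`, `a₁'(z₀) ≠ a₂'(z₀)`, `f - a₁`
vanishes at `z₀` to order exactly `p ≥ 2` and `g - a₁` to order exactly `1`,
then `g'(z₀) - a₁'(z₀) = (a₁'(z₀) - a₂'(z₀))/p`. -/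
theorem statement12
    (z₀ : ℂ) (f g a₁ a₂ : ℂ → ℂ) (p : ℕ) (hp : 2 ≤ p)
    (hf : AnalyticAt ℂ f z₀) (hg : AnalyticAt ℂ g z₀)
    (ha₁ : AnalyticAt ℂ a₁ z₀) (ha₂ : AnalyticAt ℂ a₂ z₀)
    (hne : a₁ z₀ ≠ a₂ z₀) (hne' : deriv a₁ z₀ ≠ deriv a₂ z₀)
    (hid : ∀ᶠ z in nhds z₀,
      ((deriv a₁ z - deriv a₂ z) * (f z - a₁ z) -
          (a₁ z - a₂ z) * (deriv f z - deriv a₁ z)) * (f z - g z)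
        = (deriv a₁ z - deriv a₂ z) * ((f z - a₁ z) * (f z - a₂ z)))
    (hordf : analyticOrderAt (f - a₁) z₀ = (p : ℕ∞))
    (hordg : analyticOrderAt (g - a₁) z₀ = (1 : ℕ∞)) :
    deriv g z₀ - deriv a₁ z₀ = (deriv a₁ z₀ - deriv a₂ z₀) / (p : ℂ) :=
  statement12_general z₀ f g a₁ a₂ p hp hf hg ha₁ ha₂ hne hid hordf hordg
end
end
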